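/- arXiv:2303.04301 — 4 statements merged into one kernel-verified Lean document; each statement's English description precedes it below -/
import Mathlib

section
/- Let f : [0,1] → ℝ be monotone increasing and integrable, let f̄_{a,b} = (1/(b-a))·∫_a^b f(x) dx, and define g := f̄_{1/2,1} - f̄_{0,1/2}. Then f̄_{1/4,1} - f̄_{0,3/4} ≥ g/3. -/
noncomputable def avg (f : ℝ → ℝ) (a b : ℝ) : ℝ := (1 / (b - a)) * ∫ x in a..b, f x

lemma quarter_mono (f : ℝ → ℝ) (hmono : MonotoneOn f (Set.Icc (0 : ℝ) 1))
    (hint : IntervalIntegrable f MeasureTheory.volume 0 1)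
    (a b c : ℝ) (h0 : 0 ≤ a) (hab : a ≤ b) (hbc : b ≤ c) (h1 : c ≤ 1)
    (hlen : c - b = b - a) :
    (∫ x in a..b, f x) ≤ ∫ x in b..c, f x := by
  have ha1 : a ≤ 1 := hab.trans (hbc.trans h1)
  have hb0 : 0 ≤ b := h0.trans hab
  have hintab : IntervalIntegrable f MeasureTheory.volume a b :=
    hint.mono_set (by rw [Set.uIcc_of_le hab, Set.uIcc_of_le (by norm_num : (0:ℝ) ≤ 1)]; exact Set.Icc_subset_Icc h0 (hbc.trans h1))
  have hintbc : IntervalIntegrable f MeasureTheory.volume b c :=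
    hint.mono_set (by rw [Set.uIcc_of_le hbc, Set.uIcc_of_le (by norm_num : (0:ℝ) ≤ 1)]; exact Set.Icc_subset_Icc hb0 h1)
  have hb : b ∈ Set.Icc (0:ℝ) 1 := ⟨hb0, hbc.trans h1⟩
  have h1' : (∫ x in a..b, f x) ≤ ∫ x in a..b, f b := by
    apply intervalIntegral.integral_mono_on hab hintab (intervalIntegrable_const)
    intro x hx
    exact hmono ⟨h0.trans hx.1, hx.2.trans hb.2⟩ hb hx.2
  have h2' : (∫ x in b..c, f b) ≤ ∫ x in b..c, f x := by
    apply intervalIntegral.integral_mono_on hbc intervalIntegrable_const hintbc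
    intro x hx
    exact hmono hb ⟨hb0.trans hx.1, hx.2.trans h1⟩ hx.1
  have hc1 : (∫ x in a..b, f b) = (b - a) * f b := by
    rw [intervalIntegral.integral_const]; ring_nf
  have hc2 : (∫ x in b..c, f b) = (c - b) * f b := by
    rw [intervalIntegral.integral_const]; rw [smul_eq_mul]
  calc (∫ x in a..b, f x) ≤ (b - a) * f b := by rw [← hc1]; exact h1'
    _ = (c - b) * f b := by rw [hlen]
    _ ≤ ∫ x in b..c, f x := by rw [← hc2]; exact h2'

theorem stmt_4 (f : ℝ → ℝ) (hmono : MonotoneOn f (Set.Icc (0 : ℝ) 1))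
    (hint : IntervalIntegrable f MeasureTheory.volume 0 1)
    (g : ℝ) (hg : g = avg f (1/2) 1 - avg f 0 (1/2)) :
    avg f (1/4) 1 - avg f 0 (3/4) ≥ g / 3 := by
  have sub : ∀ a b : ℝ, 0 ≤ a → a ≤ b → b ≤ 1 →
      IntervalIntegrable f MeasureTheory.volume a b := by
    intro a b h0 hab h1
    exact hint.mono_set (by rw [Set.uIcc_of_le hab, Set.uIcc_of_le (by norm_num : (0:ℝ) ≤ 1)]; exact Set.Icc_subset_Icc h0 h1)
  have i12 : IntervalIntegrable f MeasureTheory.volume 0 (1/4) := sub 0 (1/4) (by norm_num) (by norm_num) (by norm_num)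
  have i23 : IntervalIntegrable f MeasureTheory.volume (1/4) (1/2) := sub _ _ (by norm_num) (by norm_num) (by norm_num)
  have i34 : IntervalIntegrable f MeasureTheory.volume (1/2) (3/4) := sub _ _ (by norm_num) (by norm_num) (by norm_num)
  have i45 : IntervalIntegrable f MeasureTheory.volume (3/4) 1 := sub _ _ (by norm_num) (by norm_num) (by norm_num)
  have i24 : IntervalIntegrable f MeasureTheory.volume (1/4) (3/4) := sub _ _ (by norm_num) (by norm_num) (by norm_num)
  -- split integrals
  have s1 : (∫ x in (1/4:ℝ)..(3/4), f x) = (∫ x in (1/4:ℝ)..(1/2), f x) + ∫ x in (1/2:ℝ)..(3/4), f x :=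
    (intervalIntegral.integral_add_adjacent_intervals i23 i34).symm
  have s2 : (∫ x in (1/4:ℝ)..1, f x) = (∫ x in (1/4:ℝ)..(3/4), f x) + ∫ x in (3/4:ℝ)..1, f x :=
    (intervalIntegral.integral_add_adjacent_intervals i24 i45).symm
  have s3 : (∫ x in (0:ℝ)..(3/4), f x) = (∫ x in (0:ℝ)..(1/4), f x) + ∫ x in (1/4:ℝ)..(3/4), f x :=
    (intervalIntegral.integral_add_adjacent_intervals i12 i24).symm
  have s4 : (∫ x in (0:ℝ)..(1/2), f x) = (∫ x in (0:ℝ)..(1/4), f x) + ∫ x in (1/4:ℝ)..(1/2), f x :=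
    (intervalIntegral.integral_add_adjacent_intervals i12 i23).symm
  have s5 : (∫ x in (1/2:ℝ)..1, f x) = (∫ x in (1/2:ℝ)..(3/4), f x) + ∫ x in (3/4:ℝ)..1, f x :=
    (intervalIntegral.integral_add_adjacent_intervals i34 i45).symm
  have m1 : (∫ x in (0:ℝ)..(1/4), f x) ≤ ∫ x in (1/4:ℝ)..(1/2), f x :=
    quarter_mono f hmono hint 0 (1/4) (1/2) (by norm_num) (by norm_num) (by norm_num) (by norm_num) (by norm_num)
  have m2 : (∫ x in (1/2:ℝ)..(3/4), f x) ≤ ∫ x in (3/4:ℝ)..1, f x :=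
    quarter_mono f hmono hint (1/2) (3/4) 1 (by norm_num) (by norm_num) (by norm_num) (by norm_num) (by norm_num)
  simp only [avg] at hg ⊢
  rw [hg]
  rw [s2, s3, s1] at *
  rw [s4, s5]
  nlinarith [m1, m2]
end

section
/- Let U be uniformly distributed on [0,1] and let f be a measurable function such that f(U) is sub-Gaussian with sub-Gaussian norm K = ‖f(U)‖_{ψ₂}. Let δ ∈ [1/4, 3/4] and let Ũ be uniformly distributed on [0,δ]. Then f(Ũ) is sub-Gaussian with ‖f(Ũ)‖_{ψ₂} ≤ (ln(2/δ)/ln 2)·K. -/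
open MeasureTheory Real
open scoped ENNReal

/-- Sub-Gaussian norm of a real random variable `Z` under a measure `μ`. -/
noncomputable def sgNorm {Ω : Type*} [MeasurableSpace Ω] (μ : Measure Ω) (Z : Ω → ℝ) : ℝ :=
  sInf {t : ℝ | 0 < t ∧ ∫⁻ ω, ENNReal.ofReal (Real.exp ((Z ω / t) ^ 2)) ∂μ ≤ 2}

/-- The uniform distribution on `[a, b]`. -/
noncomputable def unif (a b : ℝ) : Measure ℝ :=
  (ENNReal.ofReal (b - a))⁻¹ • volume.restrict (Set.Icc a b)

lemma numeric (δ : ℝ) (h1 : 1/4 ≤ δ) (h2 : δ ≤ 3/4) :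
    Real.log 2 ^ 2 ≤ δ * Real.log (2/δ) ^ 2 := by
  have hδ0 : (0:ℝ) < δ := by linarith
  have l2l := Real.log_two_gt_d9
  have l2u := Real.log_two_lt_d9
  have h98u : Real.log (9/8) ≤ 1/8 := by
    have := Real.log_le_sub_one_of_pos (show (0:ℝ) < 9/8 by norm_num)
    linarith
  have h98l : (1:ℝ)/9 ≤ Real.log (9/8) := by
    have h := Real.log_le_sub_one_of_pos (show (0:ℝ) < 8/9 by norm_num)
    have : Real.log (8/9) = -Real.log (9/8) := by
      rw [show (8:ℝ)/9 = (9/8)⁻¹ by norm_num, Real.log_inv]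
    linarith
  have hl3 : Real.log 3 = (3 * Real.log 2 + Real.log (9/8)) / 2 := by
    have h9 : Real.log 9 = 2 * Real.log 3 := by
      rw [show (9:ℝ) = 3^2 by norm_num, Real.log_pow]; push_cast; ring
    have hd : Real.log (9/8) = Real.log 9 - Real.log 8 :=
      Real.log_div (by norm_num) (by norm_num)
    have h8 : Real.log 8 = 3 * Real.log 2 := by
      rw [show (8:ℝ) = 2^3 by norm_num, Real.log_pow]; push_cast; ring
    linarith
  have l3u : Real.log 3 ≤ 1.102223 := by rw [hl3]; linarith
  have l3l : (1.09527:ℝ) ≤ Real.log 3 := by rw [hl3]; linarith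
  rcases le_or_gt δ (3/8) with hc | hc
  · -- 2/δ ≥ 16/3
    have hX : Real.log (16/3) ≤ Real.log (2/δ) := by
      apply Real.log_le_log (by norm_num)
      rw [le_div_iff₀ hδ0]; nlinarith
    have hXval : Real.log (16/3) = 4 * Real.log 2 - Real.log 3 := by
      rw [Real.log_div (by norm_num) (by norm_num),
        show (16:ℝ) = 2^4 by norm_num, Real.log_pow]; push_cast; ring
    have hc0 : (0:ℝ) < Real.log (16/3) := by rw [hXval]; nlinarith
    nlinarith [sq_nonneg (Real.log (2/δ) - Real.log (16/3)),
      mul_le_mul_of_nonneg_left hX hc0.le]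
  · rcases le_or_gt δ (9/16) with hc2 | hc2
    · have hX : Real.log (32/9) ≤ Real.log (2/δ) := by
        apply Real.log_le_log (by norm_num)
        rw [le_div_iff₀ hδ0]; nlinarith
      have hXval : Real.log (32/9) = 5 * Real.log 2 - 2 * Real.log 3 := by
        rw [Real.log_div (by norm_num) (by norm_num),
          show (32:ℝ) = 2^5 by norm_num, show (9:ℝ) = 3^2 by norm_num,
          Real.log_pow, Real.log_pow]; push_cast; ring
      have hc0 : (0:ℝ) < Real.log (32/9) := by rw [hXval]; nlinarith
      nlinarith [sq_nonneg (Real.log (2/δ) - Real.log (32/9)),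
        mul_le_mul_of_nonneg_left hX hc0.le]
    · have hX : Real.log (8/3) ≤ Real.log (2/δ) := by
        apply Real.log_le_log (by norm_num)
        rw [le_div_iff₀ hδ0]; nlinarith
      have hXval : Real.log (8/3) = 3 * Real.log 2 - Real.log 3 := by
        rw [Real.log_div (by norm_num) (by norm_num),
          show (8:ℝ) = 2^3 by norm_num, Real.log_pow]; push_cast; ring
      have hc0 : (0:ℝ) < Real.log (8/3) := by rw [hXval]; nlinarith
      nlinarith [sq_nonneg (Real.log (2/δ) - Real.log (8/3)),
        mul_le_mul_of_nonneg_left hX hc0.le]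


lemma ptwise (L y : ℝ) (hL : 1 ≤ L) :
    Real.exp ((y / L) ^ 2) ≤ (1 - (1/L)^2) + (1/L)^2 * Real.exp (y ^ 2) := by
  have hL0 : (0:ℝ) < L := lt_of_lt_of_le one_pos hL
  set a : ℝ := (1/L)^2 with ha
  have ha0 : 0 ≤ a := sq_nonneg _
  have ha1 : a ≤ 1 := by
    rw [ha]; rw [div_pow, one_pow]
    rw [div_le_one (by positivity)]
    nlinarith
  have key := convexOn_exp.2 (Set.mem_univ (y^2)) (Set.mem_univ 0)
    ha0 (by linarith : (0:ℝ) ≤ 1 - a) (by ring)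
  simp only [smul_eq_mul, mul_zero, add_zero, Real.exp_zero, mul_one] at key
  have : (y / L) ^ 2 = a * y ^ 2 := by rw [ha]; field_simp
  rw [this]
  linarith

lemma main_key (f : ℝ → ℝ) (hf : Measurable f) (δ : ℝ) (h1 : 1/4 ≤ δ) (h2 : δ ≤ 3/4)
    (t : ℝ) (ht : 0 < t)
    (hint : ∫⁻ x, ENNReal.ofReal (Real.exp ((f x / t) ^ 2)) ∂(unif 0 1) ≤ 2) :
    ∫⁻ x, ENNReal.ofReal (Real.exp ((f x / (Real.log (2/δ) / Real.log 2 * t)) ^ 2))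
      ∂(unif 0 δ) ≤ 2 := by
  have hδ0 : (0:ℝ) < δ := by linarith
  set L : ℝ := Real.log (2/δ) / Real.log 2 with hLdef
  have hlog2 : (0:ℝ) < Real.log 2 := Real.log_pos (by norm_num)
  have hlogu : Real.log 2 ≤ Real.log (2/δ) := by
    apply Real.log_le_log (by norm_num)
    rw [le_div_iff₀ hδ0]; nlinarith
  have hlogu0 : (0:ℝ) < Real.log (2/δ) := lt_of_lt_of_le hlog2 hlogu
  have hL1 : 1 ≤ L := by rw [hLdef, le_div_iff₀ hlog2]; linarith
  have hL0 : (0:ℝ) < L := lt_of_lt_of_le one_pos hL1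
  set a : ℝ := (1/L)^2 with hadef
  have ha0 : 0 ≤ a := sq_nonneg _
  have haδ : a ≤ δ := by
    have hnum := numeric δ h1 h2
    rw [hadef, hLdef, one_div, inv_div, div_pow, div_le_iff₀ (by positivity)]
    linarith
  have ha1 : a ≤ 1 := by linarith
  set g : ℝ → ENNReal := fun x => ENNReal.ofReal (Real.exp ((f x / t) ^ 2)) with hgdef
  -- translate the hypothesis integral
  have h1int : ∫⁻ x in Set.Icc (0:ℝ) 1, g x ≤ 2 := by
    have : (ENNReal.ofReal ((1:ℝ) - 0))⁻¹ = 1 := by norm_num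
    simpa [unif, lintegral_smul_measure, this] using hint
  -- split
  have hsplit : (∫⁻ x in Set.Icc (0:ℝ) δ, g x) + ∫⁻ x in Set.Ioc δ 1, g x
      = ∫⁻ x in Set.Icc (0:ℝ) 1, g x := by
    rw [← lintegral_union measurableSet_Ioc]
    · rw [Set.Icc_union_Ioc_eq_Icc hδ0.le (by linarith)]
    · exact fun s hs hs' x hx => absurd (hs hx).2 (not_le.mpr (hs' hx).1)
  have hIoc : ENNReal.ofReal (1 - δ) ≤ ∫⁻ x in Set.Ioc δ 1, g x := by
    have hmono : ∫⁻ x in Set.Ioc δ 1, (1:ENNReal) ≤ ∫⁻ x in Set.Ioc δ 1, g x := by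
      apply lintegral_mono
      intro x
      rw [hgdef]
      exact ENNReal.one_le_ofReal.mpr (Real.one_le_exp (sq_nonneg _))
    simpa [Real.volume_Ioc] using hmono
  have hIcc : ∫⁻ x in Set.Icc (0:ℝ) δ, g x ≤ ENNReal.ofReal (1 + δ) := by
    have h2eq : (2:ℝ≥0∞) = ENNReal.ofReal (1 + δ) + ENNReal.ofReal (1 - δ) := by
      rw [← ENNReal.ofReal_add (by linarith) (by linarith)]
      norm_num
    have : (∫⁻ x in Set.Icc (0:ℝ) δ, g x) + ENNReal.ofReal (1 - δ)
        ≤ ENNReal.ofReal (1 + δ) + ENNReal.ofReal (1 - δ) := by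
      rw [← h2eq]
      calc (∫⁻ x in Set.Icc (0:ℝ) δ, g x) + ENNReal.ofReal (1 - δ)
          ≤ (∫⁻ x in Set.Icc (0:ℝ) δ, g x) + ∫⁻ x in Set.Ioc δ 1, g x :=
            add_le_add_right hIoc _
        _ = _ := hsplit
        _ ≤ 2 := h1int
    exact ENNReal.le_of_add_le_add_right ENNReal.ofReal_ne_top this
  -- pointwise bound on new integrand
  have hpt : ∀ x, ENNReal.ofReal (Real.exp ((f x / (L * t)) ^ 2))
      ≤ ENNReal.ofReal (1 - a) + ENNReal.ofReal a * g x := by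
    intro x
    have harg : f x / (L * t) = (f x / t) / L := by
      rw [div_div, mul_comm]
    rw [harg, ← ENNReal.ofReal_mul ha0, ← ENNReal.ofReal_add (by linarith) (by positivity)]
    exact ENNReal.ofReal_le_ofReal (ptwise L (f x / t) hL1)
  -- integrate over Icc 0 δ
  have hIcc' : ∫⁻ x in Set.Icc (0:ℝ) δ, ENNReal.ofReal (Real.exp ((f x / (L * t)) ^ 2))
      ≤ ENNReal.ofReal (2 * δ) := by
    calc ∫⁻ x in Set.Icc (0:ℝ) δ, ENNReal.ofReal (Real.exp ((f x / (L * t)) ^ 2))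
        ≤ ∫⁻ x in Set.Icc (0:ℝ) δ, (ENNReal.ofReal (1 - a) + ENNReal.ofReal a * g x) :=
          lintegral_mono fun x => hpt x
      _ = ENNReal.ofReal (1 - a) * volume (Set.Icc (0:ℝ) δ)
            + ENNReal.ofReal a * ∫⁻ x in Set.Icc (0:ℝ) δ, g x := by
          rw [lintegral_add_left measurable_const, lintegral_const,
            Measure.restrict_apply MeasurableSet.univ, Set.univ_inter,
            lintegral_const_mul' _ _ ENNReal.ofReal_ne_top]
      _ ≤ ENNReal.ofReal (1 - a) * ENNReal.ofReal δ + ENNReal.ofReal a * ENNReal.ofReal (1 + δ) := by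
          have hv : volume (Set.Icc (0:ℝ) δ) = ENNReal.ofReal δ := by
            rw [Real.volume_Icc]; norm_num
          rw [hv]
          exact add_le_add_right (mul_le_mul_right hIcc _) _
      _ = ENNReal.ofReal ((1 - a) * δ + a * (1 + δ)) := by
          rw [← ENNReal.ofReal_mul (by linarith), ← ENNReal.ofReal_mul ha0,
            ← ENNReal.ofReal_add (by nlinarith) (by nlinarith)]
      _ ≤ ENNReal.ofReal (2 * δ) := ENNReal.ofReal_le_ofReal (by nlinarith)
  -- conclude
  have hδne : ENNReal.ofReal δ ≠ 0 := ne_of_gt (ENNReal.ofReal_pos.mpr hδ0)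
  calc ∫⁻ x, ENNReal.ofReal (Real.exp ((f x / (L * t)) ^ 2)) ∂(unif 0 δ)
      = (ENNReal.ofReal δ)⁻¹ * ∫⁻ x in Set.Icc (0:ℝ) δ,
          ENNReal.ofReal (Real.exp ((f x / (L * t)) ^ 2)) := by
        simp [unif, lintegral_smul_measure]
    _ ≤ (ENNReal.ofReal δ)⁻¹ * ENNReal.ofReal (2 * δ) := by gcongr
    _ = 2 := by
        rw [show (2:ℝ) * δ = δ * 2 by ring, ENNReal.ofReal_mul hδ0.le,
          ← mul_assoc, ENNReal.inv_mul_cancel hδne ENNReal.ofReal_ne_top, one_mul]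
        norm_num

theorem stmt_6 (f : ℝ → ℝ) (hf : Measurable f)
    (hsub : ∃ t : ℝ, 0 < t ∧
      ∫⁻ x, ENNReal.ofReal (Real.exp ((f x / t) ^ 2)) ∂(unif 0 1) ≤ 2)
    (δ : ℝ) (hδ : δ ∈ Set.Icc (1/4 : ℝ) (3/4)) :
    (∃ t : ℝ, 0 < t ∧
      ∫⁻ x, ENNReal.ofReal (Real.exp ((f x / t) ^ 2)) ∂(unif 0 δ) ≤ 2) ∧
    sgNorm (unif 0 δ) f ≤ (Real.log (2 / δ) / Real.log 2) * sgNorm (unif 0 1) f := by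
  obtain ⟨h1, h2⟩ := hδ
  have hδ0 : (0:ℝ) < δ := by linarith
  have hlog2 : (0:ℝ) < Real.log 2 := Real.log_pos (by norm_num)
  have hlogu : Real.log 2 ≤ Real.log (2/δ) := by
    apply Real.log_le_log (by norm_num)
    rw [le_div_iff₀ hδ0]; nlinarith
  have hL0 : (0:ℝ) < Real.log (2/δ) / Real.log 2 := div_pos (lt_of_lt_of_le hlog2 hlogu) hlog2
  obtain ⟨t, ht, htint⟩ := hsub
  constructor
  · exact ⟨Real.log (2/δ) / Real.log 2 * t, by positivity,
      main_key f hf δ h1 h2 t ht htint⟩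
  · have hbdd : BddBelow {s : ℝ | 0 < s ∧
        ∫⁻ x, ENNReal.ofReal (Real.exp ((f x / s) ^ 2)) ∂(unif 0 δ) ≤ 2} :=
      ⟨0, fun x hx => hx.1.le⟩
    have hne : ({s : ℝ | 0 < s ∧
        ∫⁻ x, ENNReal.ofReal (Real.exp ((f x / s) ^ 2)) ∂(unif 0 1) ≤ 2}).Nonempty :=
      ⟨t, ht, htint⟩
    have hkey : ∀ s, 0 < s →
        (∫⁻ x, ENNReal.ofReal (Real.exp ((f x / s) ^ 2)) ∂(unif 0 1) ≤ 2) →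
        sgNorm (unif 0 δ) f ≤ Real.log (2/δ) / Real.log 2 * s := by
      intro s hs hsint
      exact csInf_le hbdd ⟨by positivity, main_key f hf δ h1 h2 s hs hsint⟩
    have hdiv : sgNorm (unif 0 δ) f / (Real.log (2/δ) / Real.log 2)
        ≤ sgNorm (unif 0 1) f := by
      apply le_csInf hne
      intro s hs
      rw [div_le_iff₀ hL0, mul_comm]
      exact hkey s hs.1 hs.2
    rw [div_le_iff₀ hL0] at hdiv
    linarith [hdiv]
end

section
/- Let n ≥ 5, let n_L = ⌊n/2⌋ and n_R = n − n_L, and let Θ ∼ Beta(n_L + 1, n_R). Then for every t ≥ 2/3, P(Θ ≥ t) ≤ 2·exp(−n·(t − 2/3)²). -/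
open MeasureTheory

/-- The Beta(a, b) distribution on ℝ. -/
noncomputable def betaMeasure (a b : ℝ) : Measure ℝ :=
  volume.withDensity (Set.indicator (Set.Ioo (0 : ℝ) 1) (fun x =>
    ENNReal.ofReal (Real.Gamma (a + b) / (Real.Gamma a * Real.Gamma b) *
      x ^ (a - 1) * (1 - x) ^ (b - 1))))


namespace Stmt11Aux
open intervalIntegral Finset Real


-- integration by parts step
lemma ibp (a b : ℕ) (t : ℝ) :
    (b+1 : ℝ) * ∫ x in t..1, x^(a+1) * (1-x)^b
      = t^(a+1) * (1-t)^(b+1) + (a+1) * ∫ x in t..1, x^a * (1-x)^(b+1) := by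
  have hder : ∀ x : ℝ, HasDerivAt (fun y : ℝ => -(y^(a+1) * (1-y)^(b+1)))
      ((b+1:ℝ) * (x^(a+1) * (1-x)^b) - (a+1:ℝ) * (x^a * (1-x)^(b+1))) x := by
    intro x
    have h1 : HasDerivAt (fun y : ℝ => y^(a+1)) ((a+1:ℝ) * x^a) x := by
      simpa using (hasDerivAt_pow (a+1) x)
    have h2 : HasDerivAt (fun y : ℝ => (1-y)^(b+1)) (-((b+1:ℝ) * (1-x)^b)) x := by
      have := ((hasDerivAt_pow (b+1) (1-x)).comp x
        ((hasDerivAt_id x).const_sub 1))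
      simpa [mul_comm, Function.comp_def] using this
    have := (h1.mul h2).neg
    refine this.congr_deriv ?_
    ring
  have hint : ∫ x in t..1, ((b+1:ℝ) * (x^(a+1) * (1-x)^b) - (a+1:ℝ) * (x^a * (1-x)^(b+1)))
      = t^(a+1) * (1-t)^(b+1) := by
    rw [integral_eq_sub_of_hasDerivAt (fun x _ => hder x)]
    · ring
    · apply Continuous.intervalIntegrable
      continuity
  have i1 : IntervalIntegrable (fun x : ℝ => x^(a+1) * (1-x)^b) volume t 1 := by
    apply Continuous.intervalIntegrable; continuity
  have i2 : IntervalIntegrable (fun x : ℝ => x^a * (1-x)^(b+1)) volume t 1 := by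
    apply Continuous.intervalIntegrable; continuity
  rw [integral_sub (i1.const_mul _) (i2.const_mul _), intervalIntegral.integral_const_mul, intervalIntegral.integral_const_mul] at hint
  linarith

lemma base (b : ℕ) (t : ℝ) :
    (b+1 : ℝ) * ∫ x in t..1, (1-x)^b = (1-t)^(b+1) := by
  have hder : ∀ x : ℝ, HasDerivAt (fun y : ℝ => -((1-y)^(b+1)) / (b+1))
      ((1-x)^b) x := by
    intro x
    have h2 : HasDerivAt (fun y : ℝ => (1-y)^(b+1)) (-((b+1:ℝ) * (1-x)^b)) x := by
      have := ((hasDerivAt_pow (b+1) (1-x)).comp x ((hasDerivAt_id x).const_sub 1))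
      simpa [mul_comm, Function.comp_def] using this
    have := (h2.neg).div_const (b+1:ℝ)
    refine this.congr_deriv ?_
    field_simp
  rw [integral_eq_sub_of_hasDerivAt (fun x _ => hder x)]
  · field_simp; simp
  · apply Continuous.intervalIntegrable; continuity


lemma key (t : ℝ) : ∀ a b : ℕ, ((a+b+1).factorial : ℝ) * ∫ x in t..1, x^a * (1-x)^b
    = (a.factorial : ℝ) * (b.factorial : ℝ) *
      ∑ k ∈ range (a+1), ((a+b+1).choose k : ℝ) * t^k * (1-t)^(a+b+1-k) := by
  intro a
  induction a with
  | zero =>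
    intro b
    have hb := base b t
    simp only [Nat.zero_add, zero_add, pow_zero, one_mul, range_one, sum_singleton,
      Nat.choose_zero_right, Nat.cast_one, Nat.sub_zero]
    have hf : ((b+1).factorial : ℝ) = ((b:ℝ)+1) * b.factorial := by
      rw [Nat.factorial_succ]; push_cast; ring
    have h0 : (Nat.factorial 0 : ℝ) = 1 := by norm_num [Nat.factorial]
    rw [hf, h0]
    linear_combination (b.factorial : ℝ) * hb
  | succ a IH =>
    intro b
    have hibp := ibp a b t
    have hIH := IH (b+1)
    have hne : ((b:ℝ)+1) ≠ 0 := by positivity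
    apply mul_left_cancel₀ hne
    have eA : a + 1 + b + 1 = a + b + 2 := by omega
    have eB : a + (b+1) + 1 = a + b + 2 := by omega
    have e2 : a + b + 2 - (a+1) = b+1 := by omega
    rw [eA, Finset.sum_range_succ, e2]
    rw [eB] at hIH
    have hch : ((a:ℝ)+1) * (a.factorial : ℝ) * (((b:ℝ)+1) * (b.factorial : ℝ)) *
        ((a+b+2).choose (a+1) : ℝ) = ((a+b+2).factorial : ℝ) := by
      have h0 := Nat.choose_mul_factorial_mul_factorial (show a+1 ≤ a+b+2 by omega)
      have h2 : a+b+2 - (a+1) = b+1 := by omega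
      rw [h2] at h0
      have : ((a+b+2).choose (a+1) * (a+1).factorial * (b+1).factorial : ℝ)
          = ((a+b+2).factorial : ℝ) := by exact_mod_cast congrArg (Nat.cast (R := ℝ)) h0
      rw [Nat.factorial_succ, Nat.factorial_succ] at this
      push_cast at this
      linarith [this]
    have hfa : ((a+1).factorial : ℝ) = ((a:ℝ)+1) * a.factorial := by
      rw [Nat.factorial_succ]; push_cast; ring
    have hfb : ((b+1).factorial : ℝ) = ((b:ℝ)+1) * b.factorial := by
      rw [Nat.factorial_succ]; push_cast; ring
    rw [hfa]
    rw [hfb] at hIH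
    linear_combination ((a+b+2).factorial : ℝ) * hibp + ((a:ℝ)+1) * hIH
      - (t^(a+1)*(1-t)^(b+1)) * hch


lemma chernoff (n m : ℕ) (t l : ℝ) (ht0 : 0 ≤ t) (ht1 : t ≤ 1) (hl : 0 ≤ l) (hm : m ≤ n) :
    ∑ k ∈ range (m+1), ((n.choose k : ℝ)) * t^k * (1-t)^(n-k)
      ≤ Real.exp (l*m) * (t*Real.exp (-l) + (1-t))^n := by
  have h1t : (0:ℝ) ≤ 1 - t := by linarith
  have h1 : ∑ k ∈ range (m+1), ((n.choose k : ℝ)) * t^k * (1-t)^(n-k)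
      ≤ ∑ k ∈ range (m+1), Real.exp (l*m) * (((n.choose k : ℝ)) * (t*Real.exp (-l))^k * (1-t)^(n-k)) := by
    apply Finset.sum_le_sum
    intro k hk
    have hk' : k ≤ m := by simpa [Nat.lt_succ_iff] using hk
    have hexp : (1:ℝ) ≤ Real.exp (l*m) * Real.exp (-l)^k := by
      rw [← Real.exp_nat_mul, ← Real.exp_add]
      apply Real.one_le_exp
      have : (k:ℝ) ≤ m := by exact_mod_cast hk'
      nlinarith
    have hnn : 0 ≤ ((n.choose k : ℝ)) * t^k * (1-t)^(n-k) :=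
      mul_nonneg (mul_nonneg (Nat.cast_nonneg _) (pow_nonneg ht0 _)) (pow_nonneg h1t _)
    calc ((n.choose k : ℝ)) * t^k * (1-t)^(n-k)
        = 1 * (((n.choose k : ℝ)) * t^k * (1-t)^(n-k)) := by ring
      _ ≤ (Real.exp (l*m) * Real.exp (-l)^k) * (((n.choose k : ℝ)) * t^k * (1-t)^(n-k)) :=
          mul_le_mul_of_nonneg_right hexp hnn
      _ = Real.exp (l*m) * (((n.choose k : ℝ)) * (t*Real.exp (-l))^k * (1-t)^(n-k)) := by
          rw [mul_pow]; ring
  have h2 : ∑ k ∈ range (m+1), Real.exp (l*m) * (((n.choose k : ℝ)) * (t*Real.exp (-l))^k * (1-t)^(n-k))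
      ≤ ∑ k ∈ range (n+1), Real.exp (l*m) * (((n.choose k : ℝ)) * (t*Real.exp (-l))^k * (1-t)^(n-k)) := by
    apply Finset.sum_le_sum_of_subset_of_nonneg
    · exact Finset.range_subset_range.2 (by omega)
    · intro k _ _
      have h' : (0:ℝ) ≤ t * Real.exp (-l) := by positivity
      exact mul_nonneg (le_of_lt (Real.exp_pos _))
        (mul_nonneg (mul_nonneg (Nat.cast_nonneg _) (pow_nonneg h' _)) (pow_nonneg h1t _))
  have h3 : ∑ k ∈ range (n+1), Real.exp (l*m) * (((n.choose k : ℝ)) * (t*Real.exp (-l))^k * (1-t)^(n-k))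
      = Real.exp (l*m) * (t*Real.exp (-l) + (1-t))^n := by
    rw [← Finset.mul_sum]
    congr 1
    rw [add_pow]
    apply Finset.sum_congr rfl
    intro k _
    ring
  linarith

lemma exp_neg_le (l : ℝ) (hl : 0 ≤ l) : Real.exp (-l) ≤ 1 - l + l^2/2 := by
  have h := Real.quadratic_le_exp_of_nonneg hl
  have hp := Real.exp_pos l
  have h1 : Real.exp (-l) * Real.exp l = 1 := by rw [← Real.exp_add]; simp
  have key : 1 ≤ (1 - l + l^2/2) * Real.exp l := by nlinarith [sq_nonneg (l*l), sq_nonneg l]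
  nlinarith

end Stmt11Aux

open Stmt11Aux Finset intervalIntegral in
theorem stmt_11 (n : ℕ) (hn : 5 ≤ n) (nL nR : ℕ) (hnL : nL = n / 2) (hnR : nR = n - nL)
    (t : ℝ) (ht : 2 / 3 ≤ t) :
    betaMeasure (nL + 1 : ℕ) (nR : ℕ) {x : ℝ | t ≤ x} ≤
      ENNReal.ofReal (2 * Real.exp (-(n : ℝ) * (t - 2 / 3) ^ 2)) := by
  have hms : MeasurableSet {x : ℝ | t ≤ x} := measurableSet_Ici
  have hsum : nL + nR = n := by omega
  have hnL2 : 2 ≤ nL := by omega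
  have hnR3 : 3 ≤ nR := by omega
  have h2nL : 2 * nL ≤ n := by omega
  rw [betaMeasure, withDensity_apply _ hms]
  by_cases ht1 : 1 ≤ t
  · have hz : ∀ᵐ x ∂(volume.restrict {x : ℝ | t ≤ x}),
        Set.indicator (Set.Ioo (0 : ℝ) 1) (fun x =>
          ENNReal.ofReal (Real.Gamma (((nL + 1 : ℕ) : ℝ) + (nR : ℝ)) /
            (Real.Gamma ((nL + 1 : ℕ) : ℝ) * Real.Gamma (nR : ℝ)) *
            x ^ (((nL + 1 : ℕ) : ℝ) - 1) * (1 - x) ^ ((nR : ℝ) - 1))) x = 0 := by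
      rw [ae_restrict_iff' hms]
      filter_upwards with x hx
      have : x ∉ Set.Ioo (0:ℝ) 1 := by
        simp only [Set.mem_Ioo, not_and, not_lt]
        intro _
        exact le_trans ht1 hx
      exact Set.indicator_of_notMem this _
    rw [lintegral_congr_ae hz, lintegral_zero]
    exact zero_le'
  · push_neg at ht1
    set m : ℕ := nR - 1 with hm
    set C : ℝ := (n.factorial : ℝ) / ((nL.factorial : ℝ) * (m.factorial : ℝ)) with hC
    -- rewrite the lintegral to an interval integral
    rw [lintegral_indicator measurableSet_Ioo, Measure.restrict_restrict measurableSet_Ioo]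
    have hseteq : Set.Ioo (0:ℝ) 1 ∩ {x : ℝ | t ≤ x} = Set.Ico t 1 := by
      ext x
      simp only [Set.mem_inter_iff, Set.mem_Ioo, Set.mem_setOf_eq, Set.mem_Ico]
      constructor
      · rintro ⟨⟨_, h1⟩, h2⟩; exact ⟨h2, h1⟩
      · rintro ⟨h1, h2⟩; exact ⟨⟨by linarith, h2⟩, h1⟩
    rw [hseteq]
    have hGamma : Real.Gamma (((nL + 1 : ℕ) : ℝ) + (nR : ℝ)) /
        (Real.Gamma ((nL + 1 : ℕ) : ℝ) * Real.Gamma (nR : ℝ)) = C := by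
      have e1 : ((nL + 1 : ℕ) : ℝ) + (nR : ℝ) = ((n : ℕ) : ℝ) + 1 := by
        push_cast; have : (nL:ℝ) + (nR:ℝ) = n := by exact_mod_cast congrArg (Nat.cast (R:=ℝ)) hsum
        linarith
      have e2 : ((nL + 1 : ℕ) : ℝ) = ((nL : ℕ) : ℝ) + 1 := by push_cast; ring
      have e3 : ((nR : ℕ) : ℝ) = ((m : ℕ) : ℝ) + 1 := by
        rw [hm]; push_cast [Nat.cast_sub (by omega : 1 ≤ nR)]; ring
      rw [e1, e2, e3, Real.Gamma_nat_eq_factorial, Real.Gamma_nat_eq_factorial,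
        Real.Gamma_nat_eq_factorial]
    have hfun : ∀ᵐ x ∂volume, x ∈ Set.Ico t 1 →
        ENNReal.ofReal (Real.Gamma (((nL + 1 : ℕ) : ℝ) + (nR : ℝ)) /
            (Real.Gamma ((nL + 1 : ℕ) : ℝ) * Real.Gamma (nR : ℝ)) *
            x ^ (((nL + 1 : ℕ) : ℝ) - 1) * (1 - x) ^ ((nR : ℝ) - 1))
          = ENNReal.ofReal (C * (x ^ nL * (1 - x) ^ m)) := by
      filter_upwards with x hx
      congr 1
      rw [hGamma]
      have e4 : (((nL + 1 : ℕ) : ℝ) - 1) = ((nL : ℕ) : ℝ) := by push_cast; ring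
      have e5 : ((nR : ℝ) - 1) = ((m : ℕ) : ℝ) := by
        rw [hm]; push_cast [Nat.cast_sub (by omega : 1 ≤ nR)]; ring
      rw [e4, e5, Real.rpow_natCast, Real.rpow_natCast]
      ring
    rw [setLIntegral_congr_fun_ae measurableSet_Ico hfun]
    have hint : IntegrableOn (fun x : ℝ => C * (x ^ nL * (1 - x) ^ m)) (Set.Ico t 1) volume :=
      (Continuous.integrableOn_Icc (continuous_const.mul ((continuous_pow nL).mul
        ((continuous_const.sub continuous_id).pow m)))).mono_set Set.Ico_subset_Icc_self
    have hae : 0 ≤ᶠ[ae (volume.restrict (Set.Ico t 1))]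
        (fun x : ℝ => C * (x ^ nL * (1 - x) ^ m)) := by
      filter_upwards [ae_restrict_mem measurableSet_Ico] with x hx
      have h1 : (0:ℝ) ≤ x := le_trans (by linarith) hx.1
      have h2 : (0:ℝ) ≤ 1 - x := by linarith [hx.2]
      have hC0 : 0 ≤ C := by positivity
      positivity
    rw [← ofReal_integral_eq_lintegral_ofReal hint hae]
    -- now convert set integral to interval integral and apply key identity
    have hIcoIoc : ∫ x in Set.Ico t 1, C * (x ^ nL * (1 - x) ^ m)
        = ∫ x in t..1, C * (x ^ nL * (1 - x) ^ m) := by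
      rw [integral_Ico_eq_integral_Ioo, intervalIntegral.integral_of_le (le_of_lt ht1),
        integral_Ioc_eq_integral_Ioo]
    rw [hIcoIoc, intervalIntegral.integral_const_mul]
    have hkey := key t nL m
    have eN : nL + m + 1 = n := by omega
    rw [eN] at hkey
    set S : ℝ := ∑ k ∈ range (nL+1), ((n.choose k : ℝ)) * t^k * (1-t)^(n-k) with hS
    have hCS : C * ∫ x in t..1, x ^ nL * (1-x) ^ m = S := by
      have hne1 : (nL.factorial : ℝ) ≠ 0 := by positivity
      have hne2 : (m.factorial : ℝ) ≠ 0 := by positivity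
      have hne3 : (n.factorial : ℝ) ≠ 0 := by positivity
      rw [hC]
      field_simp
      linear_combination hkey
    rw [hCS]
    apply ENNReal.ofReal_le_ofReal
    -- the analytic bound
    set l : ℝ := t - 1/2 with hl
    have hl0 : 0 ≤ l := by rw [hl]; linarith
    have hch := chernoff n nL t l (by linarith) (le_of_lt ht1) hl0 (by omega)
    have hE := exp_neg_le l hl0
    have hexp0 : (0:ℝ) < Real.exp (-l) := Real.exp_pos _
    have hbase : t * Real.exp (-l) + (1 - t) ≤ Real.exp (-(t * (1 - Real.exp (-l)))) := by
      have h := Real.add_one_le_exp (-(t * (1 - Real.exp (-l))))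
      linarith only [h]
    have hbase0 : 0 ≤ t * Real.exp (-l) + (1 - t) := by
      have h1 : 0 ≤ t * Real.exp (-l) := mul_nonneg (by linarith only [ht]) (le_of_lt hexp0)
      linarith only [h1, ht1]
    have hpow : (t * Real.exp (-l) + (1 - t))^n ≤ Real.exp (-(t * (1 - Real.exp (-l))))^n :=
      pow_le_pow_left₀ hbase0 hbase n
    have hchain : S ≤ Real.exp (l * nL - n * (t * (1 - Real.exp (-l)))) := by
      calc S ≤ Real.exp (l*nL) * (t*Real.exp (-l) + (1-t))^n := hch
        _ ≤ Real.exp (l*nL) * Real.exp (-(t * (1 - Real.exp (-l))))^n :=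
            mul_le_mul_of_nonneg_left hpow (le_of_lt (Real.exp_pos _))
        _ = Real.exp (l * nL - n * (t * (1 - Real.exp (-l)))) := by
            rw [← Real.exp_nat_mul, ← Real.exp_add]
            ring_nf
    have hnReal : (nL : ℝ) ≤ (n : ℝ)/2 := by
      have : (2*nL : ℕ) ≤ (n : ℕ) := h2nL
      have h2 := (Nat.cast_le (α := ℝ)).2 this
      push_cast at h2
      linarith only [h2]
    have hn0 : (0:ℝ) ≤ n := Nat.cast_nonneg n
    have hexpineq : l * nL - n * (t * (1 - Real.exp (-l))) ≤ -(n : ℝ) * (t - 2/3)^2 := by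
      have p1 : l*(nL:ℝ) ≤ l*((n:ℝ)/2) := mul_le_mul_of_nonneg_left hnReal hl0
      have p2 : t*(l - l^2/2) ≤ t*(1-Real.exp (-l)) :=
        mul_le_mul_of_nonneg_left (by linarith) (by linarith)
      have p3 : (n:ℝ)*(t*(l-l^2/2)) ≤ (n:ℝ)*(t*(1-Real.exp (-l))) :=
        mul_le_mul_of_nonneg_left p2 hn0
      have hg : l/2 - t*(l-l^2/2) + (t-2/3)^2 ≤ 0 := by
        rw [hl]
        nlinarith only [ht, ht1, sq_nonneg (t - 2/3), sq_nonneg (1-t),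
          mul_nonneg (sub_nonneg.2 ht) (sub_nonneg.2 (le_of_lt ht1))]
      have hgn : (n:ℝ) * (l/2 - t*(l-l^2/2) + (t-2/3)^2) ≤ 0 :=
        mul_nonpos_of_nonneg_of_nonpos hn0 hg
      linarith only [p1, p3, hgn]
    calc S ≤ Real.exp (l * nL - n * (t * (1 - Real.exp (-l)))) := hchain
      _ ≤ Real.exp (-(n : ℝ) * (t - 2/3)^2) := Real.exp_le_exp.2 hexpineq
      _ ≤ 2 * Real.exp (-(n : ℝ) * (t - 2/3)^2) := by
          linarith only [Real.exp_pos (-(n : ℝ) * (t - 2/3)^2)]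
end

section
/- Let n ≥ 5, n_L = ⌊n/2⌋, n_R = n − n_L, and Θ ∼ Beta(n_L + 1, n_R). Then P(Θ ∈ [1/4, 3/4]) ≥ 1 − 4·exp(−n/144). -/
open MeasureTheory

lemma betaInt (a b : ℕ) : ∫ x in (0:ℝ)..1, x^a * (1-x)^b
    = (a.factorial * b.factorial : ℝ) / (a+b+1).factorial := by
  have h := Complex.Gamma_mul_Gamma_eq_betaIntegral
    (s := (a:ℂ)+1) (t := (b:ℂ)+1) (by simp [Complex.add_re]; positivity)
    (by simp [Complex.add_re]; positivity)
  rw [Complex.betaIntegral] at h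
  have h2 : ∀ x : ℝ, ((x:ℂ))^((a:ℂ)+1-1) * ((1:ℂ)-x)^((b:ℂ)+1-1)
      = ((x^a * (1-x)^b : ℝ) : ℂ) := by
    intro x
    push_cast
    rw [add_sub_cancel_right, add_sub_cancel_right,
      Complex.cpow_natCast, Complex.cpow_natCast]
  simp only [h2] at h
  rw [intervalIntegral.integral_ofReal] at h
  have hg1 : Complex.Gamma ((a:ℂ)+1) = a.factorial := Complex.Gamma_nat_eq_factorial a
  have hg2 : Complex.Gamma ((b:ℂ)+1) = b.factorial := Complex.Gamma_nat_eq_factorial b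
  have hg3 : Complex.Gamma ((a:ℂ)+1+((b:ℂ)+1)) = (a+b+1).factorial := by
    have : (a:ℂ)+1+((b:ℂ)+1) = ((a+b+1 : ℕ):ℂ)+1 := by push_cast; ring
    rw [this, Complex.Gamma_nat_eq_factorial]
  rw [hg1, hg2, hg3] at h
  have hne : ((a+b+1).factorial : ℂ) ≠ 0 :=
    Nat.cast_ne_zero.2 (Nat.factorial_ne_zero _)
  have : ((∫ x in (0:ℝ)..1, x^a*(1-x)^b : ℝ) : ℂ)
      = (a.factorial * b.factorial : ℝ) / (a+b+1).factorial := by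
    field_simp at h ⊢
    push_cast; linear_combination -h
  exact_mod_cast this

lemma key : ∀ k : ℕ, 30 ≤ k → ((k:ℝ)+1) * (20736/20449) * (15552/20449)^k ≤ 1 := by
  intro k hk
  induction k, hk using Nat.le_induction with
  | base => norm_num
  | succ k hk ih =>
    have hc : (0:ℝ) ≤ (15552/20449:ℝ)^k := by positivity
    have hk' : (30:ℝ) ≤ k := by exact_mod_cast hk
    have h1 : ((k:ℝ)+1+1) * (20736/20449) * (15552/20449)^(k+1)
        = ((15552/20449) * (((k:ℝ)+2)/((k:ℝ)+1))) * (((k:ℝ)+1) * (20736/20449) * (15552/20449)^k) := by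
      rw [pow_succ]; field_simp; ring
    push_cast
    rw [h1]
    have h2 : (15552/20449:ℝ) * (((k:ℝ)+2)/((k:ℝ)+1)) ≤ 1 := by
      rw [← mul_div_assoc, div_le_one (by positivity)]
      nlinarith
    have h3 : (0:ℝ) ≤ ((k:ℝ)+1) * (20736/20449) * (15552/20449)^k := by positivity
    calc _ ≤ 1 * (((k:ℝ)+1) * (20736/20449) * (15552/20449)^k) :=
            mul_le_mul_of_nonneg_right h2 h3
      _ ≤ 1 := by rw [one_mul]; exact ih

lemma arith (n k : ℕ) (h1 : n ≤ 2*k+2) (h2 : 30 ≤ k) :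
    (n:ℝ) * 2^n * (3/16)^k / 2 ≤ 4 * Real.exp (-(n:ℝ)/144) := by
  have e1 : (2:ℝ)^n ≤ 4 * 4^k := by
    calc (2:ℝ)^n ≤ 2^(2*k+2) := pow_le_pow_right₀ (by norm_num) h1
      _ = 4 * 4^k := by rw [pow_add, pow_mul]; norm_num; ring
  have e2 : (143/144:ℝ)^n ≤ Real.exp (-(n:ℝ)/144) := by
    have : (143/144:ℝ) ≤ Real.exp (-1/144) := by
      have := Real.add_one_le_exp (-1/144 : ℝ); linarith
    calc (143/144:ℝ)^n ≤ (Real.exp (-1/144))^n := pow_le_pow_left₀ (by norm_num) this n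
      _ = Real.exp (-(n:ℝ)/144) := by
          rw [← Real.exp_nat_mul]; ring_nf
  have e3 : (n:ℝ) * (3/4)^k ≤ 2 * (143/144)^n := by
    have e4 : ((143/144:ℝ)^2)^(k+1) ≤ (143/144:ℝ)^n := by
      rw [← pow_mul]
      exact pow_le_pow_of_le_one (by norm_num) (by norm_num) (by omega)
    have e5 : ((k:ℝ)+1) * (3/4)^k ≤ ((143/144:ℝ)^2)^(k+1) := by
      have hkey := key k h2
      have h6 : ((143/144:ℝ)^2)^(k+1) = (20449/20736) * (20449/20736)^k := by
        rw [pow_succ]; norm_num; ring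
      rw [h6, ← sub_nonneg]
      have expand : (20449/20736:ℝ) * (20449/20736)^k - ((k:ℝ)+1) * (3/4)^k
          = ((20449/20736) * (20449/20736)^k) * (1 - ((k:ℝ)+1) * (20736/20449) * (15552/20449)^k) := by
        have h7 : ((20449/20736:ℝ))^k * (15552/20449:ℝ)^k = (3/4)^k := by
          rw [← mul_pow]; norm_num
        nlinarith [h7]
      rw [expand]
      exact mul_nonneg (by positivity) (by linarith [hkey])
    have hn2 : (n:ℝ) ≤ 2*(k:ℝ)+2 := by exact_mod_cast h1
    have hp : (0:ℝ) ≤ (3/4:ℝ)^k := by positivity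
    have h8 := mul_le_mul_of_nonneg_right hn2 hp
    linarith [e4, e5, h8]
  have hexp : (0:ℝ) ≤ (143/144:ℝ)^n := by positivity
  calc (n:ℝ) * 2^n * (3/16)^k / 2 ≤ (n:ℝ) * (4*4^k) * (3/16)^k / 2 := by
        gcongr
    _ = 2 * ((n:ℝ) * (3/4)^k) := by
        have h9 : ((4:ℝ)^k * (3/16)^k) = (3/4)^k := by rw [← mul_pow]; norm_num
        linear_combination (2*(n:ℝ)) * h9
    _ ≤ 2 * (2 * (143/144)^n) := by linarith
    _ ≤ 4 * Real.exp (-(n:ℝ)/144) := by linarith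

lemma ptbound (nL m k : ℕ) (hk1 : k ≤ nL) (hk2 : k ≤ m) (x : ℝ)
    (hx0 : 0 < x) (hx1 : x < 1) (hT : x < 1/4 ∨ 3/4 < x) :
    x^nL * (1-x)^m ≤ (3/16)^k := by
  obtain ⟨i, hi⟩ : ∃ i, nL = k + i := ⟨nL - k, by omega⟩
  obtain ⟨j, hj⟩ : ∃ j, m = k + j := ⟨m - k, by omega⟩
  have hx0' : (0:ℝ) ≤ x := hx0.le
  have h1x : (0:ℝ) ≤ 1 - x := by linarith
  have hsplit : x^nL * (1-x)^m = (x*(1-x))^k * (x^i * (1-x)^j) := by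
    rw [hi, hj, pow_add, pow_add, mul_pow]; ring
  rw [hsplit]
  have hp : x*(1-x) ≤ 3/16 := by
    rcases hT with h | h <;> nlinarith
  have hp0 : (0:ℝ) ≤ x*(1-x) := mul_nonneg hx0' h1x
  have h2 : (x*(1-x))^k ≤ (3/16)^k := pow_le_pow_left₀ hp0 hp k
  have h3 : x^i * (1-x)^j ≤ 1 :=
    mul_le_one₀ (pow_le_one₀ hx0' hx1.le) (by positivity) (pow_le_one₀ h1x (by linarith))
  calc (x*(1-x))^k * (x^i * (1-x)^j) ≤ (3/16)^k * 1 :=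
        mul_le_mul h2 h3 (by positivity) (by positivity)
    _ = (3/16)^k := mul_one _

theorem stmt_12 (n : ℕ) (hn : 5 ≤ n) (nL nR : ℕ) (hnL : nL = n / 2) (hnR : nR = n - nL) :
    1 - ENNReal.ofReal (4 * Real.exp (-(n : ℝ) / 144)) ≤
      betaMeasure (nL + 1 : ℕ) (nR : ℕ) (Set.Icc (1/4 : ℝ) (3/4)) := by
  by_cases hsmall : n ≤ 144
  · -- trivial case: RHS of the subtraction is ≥ 1
    have h1 : (1:ℝ) ≤ 4 * Real.exp (-(n:ℝ)/144) := by
      have hmono : Real.exp (-1 : ℝ) ≤ Real.exp (-(n:ℝ)/144) := by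
        apply Real.exp_le_exp.2
        have : (n:ℝ) ≤ 144 := by exact_mod_cast hsmall
        linarith
      have he : Real.exp (1:ℝ) < 3 := by
        calc Real.exp 1 < 2.7182818286 := Real.exp_one_lt_d9
          _ < 3 := by norm_num
      have hpos := Real.exp_pos (1:ℝ)
      have : (1:ℝ)/3 < Real.exp (-1 : ℝ) := by
        rw [Real.exp_neg]
        have hinv : (Real.exp 1)⁻¹ * Real.exp 1 = 1 := inv_mul_cancel₀ hpos.ne'
        have hip : 0 < (Real.exp 1)⁻¹ := inv_pos.mpr hpos
        nlinarith
      linarith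
    rw [tsub_eq_zero_of_le (ENNReal.one_le_ofReal.mpr h1)]
    exact zero_le
  push_neg at hsmall
  -- main case
  have h2 : 2 ≤ nL := by omega
  have h3 : 3 ≤ nR := by omega
  set k : ℕ := min nL (nR - 1) with hk
  have hk30 : 30 ≤ k := by omega
  have hn2k : n ≤ 2*k+2 := by omega
  set C : ℝ := (n.factorial : ℝ) / (nL.factorial * (nR-1).factorial) with hC
  have hfL : (0:ℝ) < nL.factorial := by exact_mod_cast nL.factorial_pos
  have hfR : (0:ℝ) < (nR-1).factorial := by exact_mod_cast (nR-1).factorial_pos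
  have hfn : (0:ℝ) < n.factorial := by exact_mod_cast n.factorial_pos
  have hC0 : 0 ≤ C := by rw [hC]; positivity
  -- rewrite the density
  have hdens : betaMeasure (nL + 1 : ℕ) (nR : ℕ)
      = (volume.restrict (Set.Ioo (0:ℝ) 1)).withDensity
        (fun x => ENNReal.ofReal (C * x ^ nL * (1 - x) ^ (nR - 1))) := by
    rw [betaMeasure, ← withDensity_indicator measurableSet_Ioo]
    congr 1
    funext x
    rw [Set.indicator, Set.indicator]
    congr 1
    have g1 : Real.Gamma (((nL + 1 : ℕ):ℝ) + ((nR:ℕ):ℝ)) = n.factorial := by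
      have : (((nL + 1 : ℕ):ℝ) + ((nR:ℕ):ℝ)) = ((n:ℕ):ℝ) + 1 := by
        have h : (nL:ℝ) + nR = n := by exact_mod_cast (by omega : nL + nR = n)
        push_cast; linarith
      rw [this, Real.Gamma_nat_eq_factorial]
    have g2 : Real.Gamma ((nL + 1 : ℕ):ℝ) = nL.factorial := by
      push_cast; exact Real.Gamma_nat_eq_factorial nL
    have g3 : Real.Gamma ((nR : ℕ):ℝ) = (nR-1).factorial := by
      have : ((nR:ℕ):ℝ) = ((nR - 1 : ℕ):ℝ) + 1 := by
        have : nR - 1 + 1 = nR := by omega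
        exact_mod_cast this.symm
      rw [this, Real.Gamma_nat_eq_factorial]
    rw [g1, g2, g3]
    have r1 : x ^ (((nL + 1 : ℕ):ℝ) - 1) = x ^ nL := by
      have : (((nL + 1 : ℕ):ℝ) - 1) = ((nL : ℕ):ℝ) := by push_cast; ring
      rw [this, Real.rpow_natCast]
    have r2 : (1-x) ^ (((nR : ℕ):ℝ) - 1) = (1-x) ^ (nR - 1) := by
      have : (((nR : ℕ):ℝ) - 1) = ((nR - 1 : ℕ):ℝ) := by
        have h : ((nR:ℕ):ℝ) = ((nR - 1 : ℕ):ℝ) + 1 := by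
          exact_mod_cast (by omega : nR - 1 + 1 = nR).symm
        linarith
      rw [this, Real.rpow_natCast]
    rw [r1, r2]
  set μ := (volume.restrict (Set.Ioo (0:ℝ) 1)).withDensity
    (fun x => ENNReal.ofReal (C * x ^ nL * (1 - x) ^ (nR - 1))) with hμ
  rw [hdens]
  -- total mass of Ioo 0 1 is 1
  have hcont : Continuous (fun x : ℝ => C * x ^ nL * (1 - x) ^ (nR - 1)) := by
    fun_prop
  have hmass : μ (Set.Ioo (0:ℝ) 1) = 1 := by
    rw [hμ, withDensity_apply _ measurableSet_Ioo,
      Measure.restrict_restrict measurableSet_Ioo, Set.inter_self]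
    have hint : IntegrableOn (fun x : ℝ => C * x ^ nL * (1 - x) ^ (nR - 1))
        (Set.Ioo (0:ℝ) 1) volume :=
      (hcont.integrableOn_Icc (a := 0) (b := 1)).mono_set Set.Ioo_subset_Icc_self
    have hnn : 0 ≤ᵐ[volume.restrict (Set.Ioo (0:ℝ) 1)]
        (fun x : ℝ => C * x ^ nL * (1 - x) ^ (nR - 1)) := by
      refine (ae_restrict_iff' measurableSet_Ioo).2 (ae_of_all _ ?_)
      intro x hx
      have hx0 : (0:ℝ) ≤ x := hx.1.le
      have hx1 : (0:ℝ) ≤ 1 - x := by linarith [hx.2]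
      positivity
    rw [← ofReal_integral_eq_lintegral_ofReal hint hnn]
    have hval : ∫ x in Set.Ioo (0:ℝ) 1, C * x ^ nL * (1 - x) ^ (nR - 1) = 1 := by
      have : ∫ x in Set.Ioo (0:ℝ) 1, C * x ^ nL * (1 - x) ^ (nR - 1)
          = C * ∫ x in Set.Ioo (0:ℝ) 1, x ^ nL * (1 - x) ^ (nR - 1) := by
        rw [← integral_const_mul]
        congr 1; funext x; ring
      rw [this, ← integral_Ioc_eq_integral_Ioo,
        ← intervalIntegral.integral_of_le (by norm_num : (0:ℝ) ≤ 1), betaInt]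
      have hnn' : nL + (nR - 1) + 1 = n := by omega
      rw [hnn', hC]
      field_simp
    rw [hval, ENNReal.ofReal_one]
  -- the tail bound
  set T : Set ℝ := Set.Ioo (0:ℝ) 1 \ Set.Icc (1/4 : ℝ) (3/4) with hT
  have hTm : MeasurableSet T := measurableSet_Ioo.diff measurableSet_Icc
  have hTsub : T ⊆ Set.Ioo (0:ℝ) 1 := Set.diff_subset
  have htail : μ T ≤ ENNReal.ofReal (4 * Real.exp (-(n:ℝ)/144)) := by
    rw [hμ, withDensity_apply _ hTm, Measure.restrict_restrict hTm,
      Set.inter_eq_self_of_subset_left hTsub]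
    have hvolT : volume T ≤ ENNReal.ofReal (1/2) := by
      have hsub2 : T ⊆ Set.Ioo (0:ℝ) (1/4) ∪ Set.Ioo (3/4:ℝ) 1 := by
        rintro x ⟨⟨hx0, hx1⟩, hnot⟩
        simp only [Set.mem_Icc, not_and, not_le] at hnot
        by_cases h : (1/4:ℝ) ≤ x
        · exact Or.inr ⟨hnot h, hx1⟩
        · exact Or.inl ⟨hx0, by linarith [not_le.mp h]⟩
      calc volume T ≤ volume (Set.Ioo (0:ℝ) (1/4) ∪ Set.Ioo (3/4:ℝ) 1) :=
            measure_mono hsub2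
        _ ≤ volume (Set.Ioo (0:ℝ) (1/4)) + volume (Set.Ioo (3/4:ℝ) 1) :=
            measure_union_le _ _
        _ = ENNReal.ofReal (1/2) := by
            rw [Real.volume_Ioo, Real.volume_Ioo, ← ENNReal.ofReal_add (by norm_num) (by norm_num)]
            norm_num
    have hptw : ∀ x ∈ T, ENNReal.ofReal (C * x ^ nL * (1 - x) ^ (nR - 1))
        ≤ ENNReal.ofReal (C * (3/16)^k) := by
      intro x hx
      apply ENNReal.ofReal_le_ofReal
      obtain ⟨⟨hx0, hx1⟩, hnot⟩ := hx
      simp only [Set.mem_Icc, not_and, not_le] at hnot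
      have hcase : x < 1/4 ∨ 3/4 < x := by
        by_cases h : (1/4:ℝ) ≤ x
        · exact Or.inr (hnot h)
        · exact Or.inl (not_le.mp h)
      have := ptbound nL (nR-1) k (min_le_left _ _) (min_le_right _ _) x hx0 hx1 hcase
      calc C * x ^ nL * (1 - x) ^ (nR - 1) = C * (x ^ nL * (1 - x) ^ (nR - 1)) := by ring
        _ ≤ C * (3/16)^k := mul_le_mul_of_nonneg_left this hC0
    calc ∫⁻ x in T, ENNReal.ofReal (C * x ^ nL * (1 - x) ^ (nR - 1))
        ≤ ∫⁻ _ in T, ENNReal.ofReal (C * (3/16)^k) := setLIntegral_mono' hTm hptw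
      _ = ENNReal.ofReal (C * (3/16)^k) * volume T := setLIntegral_const _ _
      _ ≤ ENNReal.ofReal (C * (3/16)^k) * ENNReal.ofReal (1/2) :=
          mul_le_mul_right hvolT _
      _ = ENNReal.ofReal (C * (3/16)^k * (1/2)) := by
          rw [← ENNReal.ofReal_mul (by positivity)]
      _ ≤ ENNReal.ofReal (4 * Real.exp (-(n:ℝ)/144)) := by
          apply ENNReal.ofReal_le_ofReal
          have hCle : C ≤ (n:ℝ) * 2^n := by
            have hfact : n.factorial = n.choose nL * nL.factorial * nR.factorial :=
              (Nat.choose_mul_factorial_mul_factorial (by omega : nL ≤ n)).symm.trans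
                (by rw [show n - nL = nR by omega])
            have hfac2 : nR.factorial = nR * (nR - 1).factorial := by
              have h := Nat.factorial_succ (nR - 1)
              have e : nR - 1 + 1 = nR := by omega
              rw [e] at h; exact h
            have hCval : C = (n.choose nL : ℝ) * nR := by
              rw [hC]
              have : (n.factorial : ℝ)
                  = (n.choose nL : ℝ) * nL.factorial * (nR * (nR-1).factorial) := by
                rw [hfact, hfac2]; push_cast; ring
              rw [this]
              field_simp
            have hch : (n.choose nL : ℝ) ≤ 2^n := by
              have h : n.choose nL ≤ 2^n := by
                calc n.choose nL ≤ ∑ i ∈ Finset.range (n+1), n.choose i :=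
                      Finset.single_le_sum (fun i _ => Nat.zero_le _)
                        (Finset.mem_range.mpr (by omega))
                  _ = 2^n := Nat.sum_range_choose n
              exact_mod_cast h
            have hnR : (nR:ℝ) ≤ n := by exact_mod_cast (by omega : nR ≤ n)
            rw [hCval]
            calc (n.choose nL : ℝ) * nR ≤ 2^n * n :=
                  mul_le_mul hch hnR (by positivity) (by positivity)
              _ = (n:ℝ) * 2^n := by ring
          have h316 : (0:ℝ) ≤ (3/16:ℝ)^k := by positivity
          calc C * (3/16)^k * (1/2) ≤ (n:ℝ) * 2^n * (3/16)^k * (1/2) := by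
                have := mul_le_mul_of_nonneg_right hCle h316
                nlinarith [this]
            _ = (n:ℝ) * 2^n * (3/16)^k / 2 := by ring
            _ ≤ 4 * Real.exp (-(n:ℝ)/144) := arith n k hn2k hk30
  -- combine
  have hcover : Set.Ioo (0:ℝ) 1 ⊆ Set.Icc (1/4 : ℝ) (3/4) ∪ T := by
    intro x hx
    by_cases h : x ∈ Set.Icc (1/4 : ℝ) (3/4)
    · exact Or.inl h
    · exact Or.inr ⟨hx, h⟩
  have hle : μ (Set.Ioo (0:ℝ) 1) ≤ μ (Set.Icc (1/4 : ℝ) (3/4)) + μ T :=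
    le_trans (measure_mono hcover) (measure_union_le _ _)
  calc 1 - ENNReal.ofReal (4 * Real.exp (-(n : ℝ) / 144))
      ≤ μ (Set.Ioo (0:ℝ) 1) - μ T := by
        rw [hmass]; exact tsub_le_tsub_left htail 1
    _ ≤ μ (Set.Icc (1/4 : ℝ) (3/4)) := tsub_le_iff_right.mpr hle
end
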